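/- Let < be a strict linear order on M₀ such that (M₀, <) is ultrahomogeneous, and suppose the age of (M₀, <) has the Ramsey property. Then there are no elements a < b < c in M₀ with E₁(a, c) and ¬E₁(a, b); equivalently, every E₁-equivalence class of M₀ is a convex subset with respect to <. -/

import Mathlib

open FirstOrder Language Structure CategoryTheory

/-- The language `L₀` with a `2n`-ary relation symbol `E_n` for each `n ≥ 1`. -/
def L₀ : FirstOrder.Language where
  Functions := fun _ => Empty
  Relations := fun k => {n : ℕ // 0 < n ∧ k = n + n}

/-- The relation symbol `E_n`. -/
def Esymb (n : ℕ) (hn : 0 < n) : L₀.Relations (n + n) := ⟨n, hn, rfl⟩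

/-- `E_n(x̄, ȳ)` in an `L₀`-structure. -/
def ERel (M : Type*) [L₀.Structure M] (n : ℕ) (hn : 0 < n) (x y : Fin n → M) : Prop :=
  Structure.RelMap (Esymb n hn) (Fin.append x y)

/-- The defining conditions for membership in `K₀`: each `E_n` holds only on pairs of
injective `n`-tuples, is invariant under permuting the entries of each tuple separately,
and induces an equivalence relation on `n`-element subsets. -/
def IsK0Struct (C : Type*) [L₀.Structure C] : Prop :=
  ∀ (n : ℕ) (hn : 0 < n),
    (∀ x y : Fin n → C, ERel C n hn x y → Function.Injective x ∧ Function.Injective y) ∧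
    (∀ (x y : Fin n → C) (σ τ : Equiv.Perm (Fin n)),
        ERel C n hn x y → ERel C n hn (x ∘ σ) (y ∘ τ)) ∧
    (∀ x : Fin n → C, Function.Injective x → ERel C n hn x x) ∧
    (∀ x y : Fin n → C, ERel C n hn x y → ERel C n hn y x) ∧
    (∀ x y z : Fin n → C, ERel C n hn x y → ERel C n hn y z → ERel C n hn x z)

/-- The class `K₀` of finite `L₀`-structures as above. -/
def K₀ : Set (Bundled L₀.Structure) := {C | Finite C ∧ IsK0Struct C}

/-- A language with a single binary relation symbol (for a linear order). -/
def Lord : FirstOrder.Language where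
  Functions := fun _ => Empty
  Relations := fun k => PLift (k = 2)

/-- Interpret the binary relation symbol of `Lord` by a given relation `r`. -/
def ordStructure (M : Type*) (r : M → M → Prop) : Lord.Structure M where
  funMap := fun f => f.elim
  RelMap := fun {k} R v => r (v (Fin.cast R.down.symm 0)) (v (Fin.cast R.down.symm 1))

/-- The language of `L₀` together with one extra binary relation symbol `<`. -/
abbrev L₀lt : FirstOrder.Language := L₀.sum Lord

/-- The expansion of an `L₀`-structure by the binary relation `r`. -/
def expStr (M : Type*) [L₀.Structure M] (r : M → M → Prop) : L₀lt.Structure M :=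
  @Language.sumStructure L₀ Lord M _ (ordStructure M r)

/-- The Ramsey property for a class `K` of finite structures: for all `A, B ∈ K` and
`k ≥ 1` there is `C ∈ K` such that every `k`-coloring of the copies of `A` in `C` is
monochromatic on the copies of `A` inside some copy `B'` of `B` in `C`. -/
def RamseyProperty {L : FirstOrder.Language} (K : Set (Bundled L.Structure)) : Prop :=
  ∀ A B : Bundled L.Structure, A ∈ K → B ∈ K → ∀ k : ℕ, 0 < k →
    ∃ C : Bundled L.Structure, C ∈ K ∧
      ∀ χ : {S : L.Substructure C // Nonempty (S ≃[L] A)} → Fin k,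
        ∃ B' : L.Substructure C, Nonempty (B' ≃[L] B) ∧
          ∀ S T : {S : L.Substructure C // Nonempty (S ≃[L] A)},
            S.1 ≤ B' → T.1 ≤ B' → χ S = χ T


/-!
Suppose `a < b < c` with `E₁(a, c)` but `¬E₁(a, b)`, hence also `¬E₁(b, c)`. Any two
`<`-ordered pairs of `E₁`-inequivalent points are isomorphic, because on a set of two such points
`E_n` holds only for `n = 1` on equal tuples and for `n = 2` on tuples enumerating the set. So
`{a, b}` embeds into `{a, b, c}` both as `{a, b}` and as `{b, c}`. Colour each copy `{u < v}` of
`{a, b}` by whether the `E₁`-class of `u` is below that of `v` in a fixed linear order on the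
classes. Ramsey gives a copy `{a' < b' < c'}` of `{a, b, c}` on which `[a'] < [b'] ↔ [b'] < [c']`;
but `[c'] = [a'] ≠ [b']`.
-/

open FirstOrder Language Structure

instance : L₀.IsRelational := fun _ => inferInstanceAs (IsEmpty Empty)

instance : Lord.IsRelational := fun _ => inferInstanceAs (IsEmpty Empty)

theorem Fin.comp_append {α β : Type*} {m n : ℕ} (g : α → β) (x : Fin m → α)
    (y : Fin n → α) :
    g ∘ Fin.append x y = Fin.append (g ∘ x) (g ∘ y) := by
  funext i
  refine Fin.addCases (fun j => ?_) (fun j => ?_) i <;> simp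

theorem Fin.le_two_of_injective_of_mem_pair {α : Type*} {p q : α} {n : ℕ} {l : Fin n → α}
    (hl : l.Injective) (hlpq : ∀ i, l i ∈ ({p, q} : Set α)) : n ≤ 2 := by
  classical
  simpa using (Finset.card_le_card_of_injOn l (s := Finset.univ) (t := {p, q})
    (fun i _ => by simpa using hlpq i) hl.injOn).trans Finset.card_le_two

theorem Fin.exists_perm_eq_comp_of_mem_pair {α : Type*} {p q : α} {l t : Fin 2 → α}
    (hl : l.Injective) (ht : t.Injective) (hlpq : ∀ i, l i ∈ ({p, q} : Set α))
    (htpq : ∀ i, t i ∈ ({p, q} : Set α)) : ∃ σ : Equiv.Perm (Fin 2), t = l ∘ σ := by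
  have hl01 : l 0 ≠ l 1 := hl.ne (by decide)
  have ht01 : t 0 ≠ t 1 := ht.ne (by decide)
  have hl0 := hlpq 0; have hl1 := hlpq 1; have ht0 := htpq 0; have ht1 := htpq 1
  simp only [Set.mem_insert_iff, Set.mem_singleton_iff] at hl0 hl1 ht0 ht1
  by_cases h : t 0 = l 0
  · refine ⟨1, funext fun i => ?_⟩
    fin_cases i <;> simp <;> grind
  · refine ⟨Equiv.swap 0 1, funext fun i => ?_⟩
    fin_cases i <;> simp <;> grind

theorem exists_mem_range_rel_and_iff {ι α : Type*} {r Q : α → α → Prop}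
    (hr : ∀ u v, r u v → ¬ r v u) (F : ι → α) {i j : ι} (hij : ∀ k, k = i ∨ k = j)
    (hF : r (F i) (F j)) :
    (∃ u ∈ Set.range F, ∃ v ∈ Set.range F, r u v ∧ Q u v) ↔ Q (F i) (F j) := by
  refine ⟨?_, fun hQ => ⟨_, ⟨i, rfl⟩, _, ⟨j, rfl⟩, hF, hQ⟩⟩
  rintro ⟨_, ⟨k, rfl⟩, _, ⟨l, rfl⟩, hkl, hQ⟩
  rcases hij k with rfl | rfl <;> rcases hij l with rfl | rfl
  · exact (hr _ _ hkl hkl).elim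
  · exact hQ
  · exact (hr _ _ hF hkl).elim
  · exact (hr _ _ hkl hkl).elim

theorem FirstOrder.Language.Embedding.relMap_pair_iff {L : Language} {M N : Type*}
    [L.Structure M] [L.Structure N] (F : M ↪[L] N) (R : L.Relations 2) (u v : M) :
    RelMap R ![F u, F v] ↔ RelMap R ![u, v] := by
  rw [← F.map_rel R ![u, v] ]
  congr! 1
  ext i; fin_cases i <;> rfl

def FirstOrder.Language.Substructure.embeddingOfInjOn {L : Language} [L.IsRelational]
    {M N : Type*} [L.Structure M] [L.Structure N] (S : L.Substructure M) (f : M → N)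
    (hf : Set.InjOn f S)
    (hrel : ∀ {n} (R : L.Relations n) (v : Fin n → M), (∀ i, v i ∈ S) →
      (RelMap R (f ∘ v) ↔ RelMap R v)) :
    S ↪[L] N where
  toFun x := f x
  inj' x y h := Subtype.ext (hf x.2 y.2 h)
  map_fun' f := isEmptyElim f
  map_rel' R v := hrel R _ fun i => (v i).2

theorem RamseyProperty.exists_embedding_range_iff {L : Language} {K : Set (Bundled L.Structure)}
    (hK : RamseyProperty K) {A B : Bundled L.Structure} (hA : A ∈ K) (hB : B ∈ K) :
    ∃ C ∈ K, ∀ P : L.Substructure C → Prop, ∃ g : B ↪[L] C, ∀ f₁ f₂ : A ↪[L] B,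
      P (g.comp f₁).toHom.range ↔ P (g.comp f₂).toHom.range := by
  classical
  obtain ⟨C, hC, hRam⟩ := hK A B hA hB 2 two_pos
  refine ⟨C, hC, fun P => ?_⟩
  obtain ⟨B', ⟨j⟩, hmono⟩ := hRam fun S => if P S.1 then 0 else 1
  let g : B ↪[L] C := B'.subtype.comp j.symm.toEmbedding
  have hrange : ∀ f : A ↪[L] B, (g.comp f).toHom.range ≤ B' := by
    rintro f _ ⟨x, rfl⟩
    exact (j.symm (f x)).2
  refine ⟨g, fun f₁ f₂ => ?_⟩
  have := hmono ⟨_, ⟨(Embedding.equivRange _).symm⟩⟩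
    ⟨_, ⟨(Embedding.equivRange _).symm⟩⟩ (hrange f₁) (hrange f₂)
  split_ifs at this <;> simp_all

theorem RamseyProperty.exists_embedding_pair_iff {L : Language} {M : Type*} [L.Structure M]
    (hRamsey : RamseyProperty (L.age M)) {R : L.Relations 2}
    (hR : ∀ u v : M, RelMap R ![u, v] → ¬ RelMap R ![v, u]) {A B : Bundled L.Structure}
    (hA : A ∈ L.age M) (hB : B ∈ L.age M) {a b : A} (hab : RelMap R ![a, b])
    (hA2 : ∀ z, z = a ∨ z = b) (f₁ f₂ : A ↪[L] B) (Φ : M → M → Prop) :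
    ∃ h : B ↪[L] M, Φ (h (f₁ a)) (h (f₁ b)) ↔ Φ (h (f₂ a)) (h (f₂ b)) := by
  obtain ⟨C, ⟨-, ⟨e⟩⟩, hC⟩ := hRamsey.exists_embedding_range_iff hA hB
  obtain ⟨g, hg⟩ := hC fun S =>
    ∃ u ∈ (S : Set C), ∃ v ∈ (S : Set C), RelMap R ![e u, e v] ∧ Φ (e u) (e v)
  have hcolour : ∀ f : A ↪[L] B,
      (∃ u ∈ ((g.comp f).toHom.range : Set C), ∃ v ∈ ((g.comp f).toHom.range : Set C),
        RelMap R ![e u, e v] ∧ Φ (e u) (e v)) ↔ Φ (e (g (f a))) (e (g (f b))) := fun f => by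
    rw [Hom.range_coe]
    exact exists_mem_range_rel_and_iff (fun u v => hR (e u) (e v)) _ hA2
      (((e.comp (g.comp f)).relMap_pair_iff R a b).2 hab)
  exact ⟨e.comp g, (hcolour f₁).symm.trans ((hg f₁ f₂).trans (hcolour f₂))⟩

section K0

variable {M N : Type*} [L₀.Structure M] [L₀.Structure N]

theorem ERel_comp_embedding (f : M ↪[L₀] N) {n : ℕ} (hn : 0 < n) (x y : Fin n → M) :
    ERel N n hn (f ∘ x) (f ∘ y) ↔ ERel M n hn x y := by
  rw [ERel, ← Fin.comp_append]
  exact f.map_rel _ _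

theorem exists_isK0Struct_lift (h : L₀.age M ⊆ K₀) {n : ℕ} (x y z : Fin n → M) :
    ∃ (S : L₀.Substructure M) (x' y' z' : Fin n → S), IsK0Struct S ∧
      S.subtype ∘ x' = x ∧ S.subtype ∘ y' = y ∧ S.subtype ∘ z' = z := by
  let S := Substructure.closure L₀ (Set.range x ∪ Set.range y ∪ Set.range z)
  have hS : IsK0Struct S :=
    (h (age.fg_substructure (Substructure.fg_closure (Set.toFinite _)))).2
  exact ⟨S, fun i => ⟨x i, Substructure.subset_closure (by simp)⟩,
    fun i => ⟨y i, Substructure.subset_closure (by simp)⟩,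
    fun i => ⟨z i, Substructure.subset_closure (by simp)⟩, hS, rfl, rfl, rfl⟩

theorem IsK0Struct.of_age_subset (h : L₀.age M ⊆ K₀) : IsK0Struct M := by
  intro n hn
  refine ⟨fun x y hxy => ?_, fun x y σ τ hxy => ?_, fun x hx => ?_, fun x y hxy => ?_,
    fun x y z hxy hyz => ?_⟩
  · obtain ⟨S, x, y, -, hS, rfl, rfl, -⟩ := exists_isK0Struct_lift h x y x
    rw [ERel_comp_embedding] at hxy
    obtain ⟨hx, hy⟩ := (hS n hn).1 x y hxy
    exact ⟨S.subtype.injective.comp hx, S.subtype.injective.comp hy⟩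
  · obtain ⟨S, x, y, -, hS, rfl, rfl, -⟩ := exists_isK0Struct_lift h x y x
    rw [ERel_comp_embedding] at hxy
    exact (ERel_comp_embedding S.subtype hn (x ∘ σ) (y ∘ τ)).2 ((hS n hn).2.1 x y σ τ hxy)
  · obtain ⟨S, x, -, -, hS, rfl, -, -⟩ := exists_isK0Struct_lift h x x x
    exact (ERel_comp_embedding S.subtype hn x x).2
      ((hS n hn).2.2.1 x (S.subtype.injective.of_comp_iff x |>.1 hx))
  · obtain ⟨S, x, y, -, hS, rfl, rfl, -⟩ := exists_isK0Struct_lift h x y x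
    rw [ERel_comp_embedding] at hxy ⊢
    exact (hS n hn).2.2.2.1 x y hxy
  · obtain ⟨S, x, y, z, hS, rfl, rfl, rfl⟩ := exists_isK0Struct_lift h x y z
    rw [ERel_comp_embedding] at hxy hyz ⊢
    exact (hS n hn).2.2.2.2 x y z hxy hyz

def E₁ (M : Type*) [L₀.Structure M] (u v : M) : Prop :=
  ERel M 1 one_pos (fun _ => u) (fun _ => v)

namespace IsK0Struct

theorem e1_refl (hK : IsK0Struct M) (u : M) : E₁ M u u :=
  (hK 1 one_pos).2.2.1 _ fun i j _ => Subsingleton.elim i j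

theorem e1_symm (hK : IsK0Struct M) {u v : M} : E₁ M u v → E₁ M v u :=
  (hK 1 one_pos).2.2.2.1 _ _

theorem e1_trans (hK : IsK0Struct M) {u v w : M} : E₁ M u v → E₁ M v w → E₁ M u w :=
  (hK 1 one_pos).2.2.2.2 _ _ _

def e1Setoid (hK : IsK0Struct M) : Setoid M :=
  ⟨E₁ M, hK.e1_refl, hK.e1_symm, hK.e1_trans⟩

theorem ERel_iff_of_mem_pair (hK : IsK0Struct M) {p q : M} (hpq : ¬ E₁ M p q) {n : ℕ}
    (hn : 0 < n) {l t : Fin n → M} (hlpq : ∀ i, l i ∈ ({p, q} : Set M))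
    (htpq : ∀ i, t i ∈ ({p, q} : Set M)) :
    ERel M n hn l t ↔ (n = 1 ∧ l = t) ∨ (n = 2 ∧ l.Injective ∧ t.Injective) := by
  constructor
  · intro h
    obtain ⟨hl, ht⟩ := (hK n hn).1 l t h
    have hn2 := Fin.le_two_of_injective_of_mem_pair hl hlpq
    interval_cases n
    · refine Or.inl ⟨rfl, funext fun i => ?_⟩
      have hconst : ∀ f : Fin 1 → M, f = fun _ => f 0 :=
        fun f => funext fun j => congrArg f (Subsingleton.elim j 0)
      have h0 : E₁ M (l 0) (t 0) := by
        rw [hconst l, hconst t] at h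
        exact h
      have hl0 := hlpq 0; have ht0 := htpq 0
      simp only [Set.mem_insert_iff, Set.mem_singleton_iff] at hl0 ht0
      rw [Subsingleton.elim i 0]
      rcases hl0 with h1 | h1 <;> rcases ht0 with h2 | h2 <;> rw [h1, h2] at h0 ⊢
      · exact (hpq h0).elim
      · exact (hpq (hK.e1_symm h0)).elim
    · exact Or.inr ⟨rfl, hl, ht⟩
  · rintro (⟨rfl, rfl⟩ | ⟨rfl, hl, ht⟩)
    · exact (hK 1 hn).2.2.1 l (Function.injective_of_subsingleton l)
    · obtain ⟨σ, rfl⟩ := Fin.exists_perm_eq_comp_of_mem_pair hl ht hlpq htpq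
      exact (hK 2 hn).2.1 l l 1 σ ((hK 2 hn).2.2.1 l hl)

theorem ERel_comp_iff_of_mapsTo_pair (hM : IsK0Struct M) (hN : IsK0Struct N) {p q : M}
    {p' q' : N} (hpq : ¬ E₁ M p q) (hpq' : ¬ E₁ N p' q') {φ : M → N}
    (hφ : Set.MapsTo φ {p, q} {p', q'}) (hinj : Set.InjOn φ {p, q}) {n : ℕ} (hn : 0 < n)
    {l t : Fin n → M} (hl : ∀ i, l i ∈ ({p, q} : Set M))
    (ht : ∀ i, t i ∈ ({p, q} : Set M)) :
    ERel N n hn (φ ∘ l) (φ ∘ t) ↔ ERel M n hn l t := by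
  have hlt : φ ∘ l = φ ∘ t ↔ l = t := by
    simp only [funext_iff, Function.comp_apply]
    exact forall_congr' fun i => hinj.eq_iff (hl i) (ht i)
  rw [hN.ERel_iff_of_mem_pair hpq' hn (l := φ ∘ l) (t := φ ∘ t) (fun i => hφ (hl i))
      (fun i => hφ (ht i)), hM.ERel_iff_of_mem_pair hpq hn hl ht, hlt,
    hinj.injective_iff _ (Set.range_subset_iff.2 hl),
    hinj.injective_iff _ (Set.range_subset_iff.2 ht)]

end IsK0Struct

def ordSymb : L₀lt.Relations 2 := Sum.inr ⟨rfl⟩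

def e1Symb : L₀lt.Relations 2 := Sum.inl (Esymb 1 one_pos)

theorem E₁_embedding_apply_iff (r : M → M → Prop) :
    letI := expStr M r
    ∀ {S : L₀lt.Substructure M} (F : S ↪[L₀lt] M) (u v : S),
      E₁ M (F u) (F v) ↔ E₁ M u v := by
  let _ := expStr M r
  intro S F u v
  have hpair (x y : M) : E₁ M x y ↔ RelMap e1Symb ![x, y] := by
    have : Fin.append (fun _ : Fin 1 => x) (fun _ : Fin 1 => y) = ![x, y] := by
      ext i; fin_cases i <;> rfl
    rw [E₁, ERel, this]
    rfl
  rw [hpair, hpair]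
  exact (F.relMap_pair_iff e1Symb u v).trans (S.subtype.relMap_pair_iff e1Symb u v).symm

theorem relMap_expStr_comp_iff {r : M → M → Prop} {s : N → N → Prop} {S : Set M}
    {f : M → N}
    (hr : ∀ u ∈ S, ∀ v ∈ S, s (f u) (f v) ↔ r u v)
    (hE : ∀ n (hn : 0 < n) (l t : Fin n → M), (∀ i, l i ∈ S) → (∀ i, t i ∈ S) →
      (ERel N n hn (f ∘ l) (f ∘ t) ↔ ERel M n hn l t))
    {k : ℕ} (R : L₀lt.Relations k) (v : Fin k → M) (hv : ∀ i, v i ∈ S) :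
    @RelMap L₀lt N (expStr N s) k R (f ∘ v) ↔ @RelMap L₀lt M (expStr M r) k R v := by
  rcases R with ⟨n, hn, rfl⟩ | ⟨⟨rfl⟩⟩
  · rw [← Fin.append_castAdd_natAdd (f := v), Fin.comp_append]
    exact hE n hn _ _ (fun i => hv _) (fun i => hv _)
  · exact hr _ (hv _) _ (hv _)

theorem IsK0Struct.exists_pair_embedding (hK : IsK0Struct M) {r : M → M → Prop}
    [IsStrictOrder M r] {p q p' q' : M} (hpq : r p q) (hpq' : r p' q') (hE : ¬ E₁ M p q)
    (hE' : ¬ E₁ M p' q') :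
    letI := expStr M r
    ∀ S : L₀lt.Substructure M, p' ∈ S → q' ∈ S →
      ∃ f : Substructure.closure L₀lt {p, q} ↪[L₀lt] S,
        ∀ z : Substructure.closure L₀lt {p, q},
          ((z : M) = p → (f z : M) = p') ∧ ((z : M) = q → (f z : M) = q') := by
  classical
  let _ := expStr M r
  intro S hp' hq'
  let φ : M → M := fun z => if z = p then p' else q'
  have hφp : φ p = p' := if_pos rfl
  have hφq : φ q = q' := if_neg (ne_of_irrefl hpq).symm
  have hmaps : Set.MapsTo φ {p, q} {p', q'} := by
    rintro z (rfl | rfl) <;> simp [hφp, hφq]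
  have hinj : Set.InjOn φ {p, q} := Set.injOn_pair.2 fun h =>
    ((ne_of_irrefl hpq') (by rwa [hφp, hφq] at h)).elim
  have hrel : ∀ u ∈ ({p, q} : Set M), ∀ v ∈ ({p, q} : Set M),
      r (φ u) (φ v) ↔ r u v := by
    rintro u (rfl | rfl) v (rfl | rfl) <;>
      simp only [hφp, hφq, hpq, hpq', irrefl, asymm hpq, asymm hpq']
  have hS : (Substructure.closure L₀lt {p, q} : Set M) = {p, q} :=
    Substructure.closure_eq_of_isRelational _ _
  let f := (Substructure.closure L₀lt {p, q}).embeddingOfInjOn φ (by rwa [hS])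
    fun R v hv => relMap_expStr_comp_iff hrel
      (fun n hn l t hl ht => hK.ERel_comp_iff_of_mapsTo_pair hK hE hE' hmaps hinj hn hl ht)
      R v (by rwa [← hS])
  have hfS : ∀ z, f z ∈ S := fun z => by
    show φ z ∈ S
    rcases hmaps ((Substructure.mem_closure_iff_of_isRelational L₀lt _ _).1 z.2) with h | h
    · rwa [h]
    · rwa [Set.mem_singleton_iff.1 h]
  exact ⟨Embedding.codRestrict S f hfS,
    fun z => ⟨fun h => (congrArg φ h).trans hφp, fun h => (congrArg φ h).trans hφq⟩⟩

theorem IsK0Struct.e1_of_lt_of_lt_of_e1 (hK : IsK0Struct M) {r : M → M → Prop}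
    (hr : IsStrictTotalOrder M r) (hRamsey : RamseyProperty (@Language.age L₀lt M (expStr M r)))
    {a b c : M} (hab : r a b) (hbc : r b c) (hac : E₁ M a c) : E₁ M a b := by
  by_contra hnab
  have hnbc : ¬ E₁ M b c := fun h => hnab (hK.e1_trans hac (hK.e1_symm h))
  have := hr
  let _ := expStr M r
  let A := Substructure.closure L₀lt ({a, b} : Set M)
  let B := Substructure.closure L₀lt ({a, b, c} : Set M)
  let a₀ : A := ⟨a, Substructure.subset_closure (by simp)⟩
  let b₀ : A := ⟨b, Substructure.subset_closure (by simp)⟩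
  let a₁ : B := ⟨a, Substructure.subset_closure (by simp)⟩
  let b₁ : B := ⟨b, Substructure.subset_closure (by simp)⟩
  let c₁ : B := ⟨c, Substructure.subset_closure (by simp)⟩
  have hA : ∀ z : A, z = a₀ ∨ z = b₀ := by
    rintro ⟨z, hz⟩
    obtain rfl | rfl : z = a ∨ z = b := by simpa [A] using hz
    exacts [Or.inl rfl, Or.inr rfl]
  let incl : A ↪[L₀lt] B := Substructure.inclusion (Substructure.closure_mono
    (Set.insert_subset_insert (Set.singleton_subset_iff.2 (Set.mem_insert _ _))))
  obtain ⟨shift, hshift⟩ := hK.exists_pair_embedding hab hbc hnab hnbc B b₁.2 c₁.2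
  have hshift_a : shift a₀ = b₁ := Subtype.ext ((hshift a₀).1 rfl)
  have hshift_b : shift b₀ = c₁ := Subtype.ext ((hshift b₀).2 rfl)
  let _ : LinearOrder (Quotient hK.e1Setoid) := WellOrderingRel.isWellOrder.linearOrder
  let cls : M → Quotient hK.e1Setoid := Quotient.mk _
  obtain ⟨h, hh⟩ := hRamsey.exists_embedding_pair_iff (R := ordSymb) (a := a₀) (b := b₀)
    (fun u v => asymm (r := r)) (age.fg_substructure (Substructure.fg_closure (Set.toFinite _)))
    (age.fg_substructure (Substructure.fg_closure (Set.toFinite _))) hab hA incl shift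
    (fun u v => cls u < cls v)
  rw [hshift_a, hshift_b] at hh
  have hE (u v : B) : cls (h u) = cls (h v) ↔ E₁ M u v :=
    Quotient.eq.trans (E₁_embedding_apply_iff r h u v)
  have hac' : cls (h a₁) = cls (h c₁) := (hE a₁ c₁).2 hac
  have hab' : cls (h a₁) ≠ cls (h b₁) := fun heq => hnab ((hE a₁ b₁).1 heq)
  change cls (h a₁) < cls (h b₁) ↔ _ at hh
  rcases lt_or_gt_of_ne hab' with hlt | hlt
  · exact lt_asymm hlt (by simpa [hac'] using hh.1 hlt)
  · exact lt_asymm hlt (hh.2 (by simpa [hac'] using hlt))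

end K0

theorem M0_E1_classes_convex_general (M₀ : Type) [L₀.Structure M₀]
    (hage : L₀.age M₀ = K₀)
    (r : M₀ → M₀ → Prop) (hr : IsStrictTotalOrder M₀ r)
    (hRamsey : RamseyProperty (@Language.age L₀lt M₀ (expStr M₀ r))) :
    (¬ ∃ a b c : M₀, r a b ∧ r b c ∧ ERel M₀ 1 one_pos (fun _ => a) (fun _ => c) ∧
        ¬ ERel M₀ 1 one_pos (fun _ => a) (fun _ => b)) ∧
    (∀ a b c : M₀, r a b → r b c → ERel M₀ 1 one_pos (fun _ => a) (fun _ => c) →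
        ERel M₀ 1 one_pos (fun _ => a) (fun _ => b) ∧
        ERel M₀ 1 one_pos (fun _ => b) (fun _ => c)) := by
  have hK := IsK0Struct.of_age_subset hage.le
  have hconvex {a b c : M₀} (hab : r a b) (hbc : r b c) (hac : E₁ M₀ a c) : E₁ M₀ a b :=
    hK.e1_of_lt_of_lt_of_e1 hr hRamsey hab hbc hac
  exact ⟨fun ⟨a, b, c, hab, hbc, hac, hnab⟩ => hnab (hconvex hab hbc hac),
    fun a b c hab hbc hac =>
      ⟨hconvex hab hbc hac, hK.e1_trans (hK.e1_symm (hconvex hab hbc hac)) hac⟩⟩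

/-- if `<` is a strict linear order on `M₀` making `(M₀, <)` ultrahomogeneous
and its age has the Ramsey property, then there are no `a < b < c` with `E₁(a, c)` and
`¬E₁(a, b)`; equivalently, every `E₁`-class is convex with respect to `<`. -/
theorem M0_E1_classes_convex (M₀ : Type) [L₀.Structure M₀] [Countable M₀]
    (hUH : L₀.IsUltrahomogeneous M₀) (hage : L₀.age M₀ = K₀)
    (r : M₀ → M₀ → Prop) (hr : IsStrictTotalOrder M₀ r)
    (hUH' : @Language.IsUltrahomogeneous L₀lt M₀ (expStr M₀ r))
    (hRamsey : RamseyProperty (@Language.age L₀lt M₀ (expStr M₀ r))) :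
    (¬ ∃ a b c : M₀, r a b ∧ r b c ∧ ERel M₀ 1 one_pos (fun _ => a) (fun _ => c) ∧
        ¬ ERel M₀ 1 one_pos (fun _ => a) (fun _ => b)) ∧
    (∀ a b c : M₀, r a b → r b c → ERel M₀ 1 one_pos (fun _ => a) (fun _ => c) →
        ERel M₀ 1 one_pos (fun _ => a) (fun _ => b) ∧
        ERel M₀ 1 one_pos (fun _ => b) (fun _ => c)) :=
  M0_E1_classes_convex_general M₀ hage r hr hRamsey
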